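/- arXiv:2405.14509 — 3 statements merged into one kernel-verified Lean document; each statement's English description precedes it below -/
import Mathlib

section
/- For all x > 0, log(x) - ψ(x) ≥ 1/(2x), where ψ is the digamma function. -/
open Real

/-- The digamma function: derivative of `log ∘ Γ`. -/
noncomputable def digamma (x : ℝ) : ℝ := deriv (fun y : ℝ => Real.log (Real.Gamma y)) x


lemma diffF {x : ℝ} (hx : 0 < x) :
    DifferentiableAt ℝ (fun y : ℝ => Real.log (Real.Gamma y)) x := by
  have h1 : DifferentiableAt ℝ Real.Gamma x :=
    Real.differentiableAt_Gamma (fun m => (((neg_nonpos.2 (Nat.cast_nonneg m)).trans_lt hx).ne'))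
  exact h1.log (Real.Gamma_pos_of_pos hx).ne'

-- ψ(x) ≤ log x
lemma digamma_le_log {x : ℝ} (hx : 0 < x) : digamma x ≤ Real.log x := by
  have h := Real.convexOn_log_Gamma.deriv_le_slope (Set.mem_Ioi.2 hx)
    (Set.mem_Ioi.2 (by linarith : (0:ℝ) < x + 1)) (by linarith) (diffF hx)
  have hs : slope (Real.log ∘ Real.Gamma) x (x + 1) = Real.log x := by
    rw [slope_def_field]
    simp only [Function.comp_apply, Real.Gamma_add_one hx.ne']
    rw [Real.log_mul hx.ne' (Real.Gamma_pos_of_pos hx).ne']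
    ring
  have : deriv (Real.log ∘ Real.Gamma) x = digamma x := rfl
  rw [this, hs] at h
  exact h

lemma hasDerivF {x : ℝ} (hx : 0 < x) :
    HasDerivAt (fun y : ℝ => Real.log (Real.Gamma y)) (digamma x) x :=
  (diffF hx).hasDerivAt

lemma digamma_add_one {x : ℝ} (hx : 0 < x) :
    digamma (x + 1) = digamma x + 1 / x := by
  have h1 : HasDerivAt (fun y : ℝ => Real.log (Real.Gamma (y + 1))) (digamma (x + 1)) x := by
    simpa [Function.comp_def] using (hasDerivF (by linarith : 0 < x + 1)).comp x ((hasDerivAt_id x).add_const 1)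
  have h2 : HasDerivAt (fun y : ℝ => Real.log y + Real.log (Real.Gamma y))
      (1 / x + digamma x) x := by
    simpa [Pi.add_def] using ((Real.hasDerivAt_log hx.ne').add (hasDerivF hx))
  have heq : (fun y : ℝ => Real.log (Real.Gamma (y + 1)))
      =ᶠ[nhds x] (fun y : ℝ => Real.log y + Real.log (Real.Gamma y)) := by
    filter_upwards [eventually_gt_nhds hx] with y hy
    rw [Real.Gamma_add_one hy.ne', Real.log_mul hy.ne' (Real.Gamma_pos_of_pos hy).ne']
  have h1' : HasDerivAt (fun y : ℝ => Real.log y + Real.log (Real.Gamma y))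
      (digamma (x + 1)) x := by
    exact h1.congr_of_eventuallyEq heq.symm
  rw [h1'.unique h2]; ring

lemma log_le_half_sub_inv {t : ℝ} (ht : 1 ≤ t) : Real.log t ≤ (t - t⁻¹) / 2 := by
  set h : ℝ → ℝ := fun s => (s - s⁻¹) / 2 - Real.log s with hh
  have hd : ∀ s : ℝ, 0 < s → HasDerivAt h ((1 + s⁻¹ ^ 2) / 2 - s⁻¹) s := by
    intro s hs
    have : HasDerivAt (fun s : ℝ => (s - s⁻¹) / 2 - Real.log s) ((1 - -(s ^ 2)⁻¹) / 2 - s⁻¹) s := (((hasDerivAt_id s).sub (hasDerivAt_inv hs.ne')).div_const 2).sub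
      (Real.hasDerivAt_log hs.ne')
    convert this using 1
    ring
  have hpos : ∀ s : ℝ, s ∈ Set.Ici (1:ℝ) → 0 < s := fun s hs => lt_of_lt_of_le one_pos hs
  have hmono : MonotoneOn h (Set.Ici 1) := by
    apply monotoneOn_of_deriv_nonneg (convex_Ici 1)
    · exact fun s hs => ((hd s (hpos s hs)).differentiableAt.continuousAt).continuousWithinAt
    · intro s hs
      rw [interior_Ici] at hs
      exact ((hd s (hpos s (Set.mem_Ici.2 hs.le))).differentiableAt).differentiableWithinAt
    · intro s hs
      rw [interior_Ici] at hs
      have hs0 : 0 < s := lt_trans one_pos hs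
      rw [(hd s hs0).deriv]
      have : (1 + s⁻¹ ^ 2) / 2 - s⁻¹ = (s - 1) ^ 2 / (2 * s ^ 2) := by
        field_simp; ring
      rw [this]; positivity
  have h0 : h 1 = 0 := by simp [hh]
  have := hmono (Set.self_mem_Ici) (Set.mem_Ici.2 ht) ht
  rw [h0] at this
  simp only [hh] at this
  linarith

lemma log_trapezoid {x : ℝ} (hx : 0 < x) :
    Real.log (x + 1) - Real.log x ≤ 1 / (2 * x) + 1 / (2 * (x + 1)) := by
  have ht : (1 : ℝ) ≤ (x + 1) / x := by
    rw [le_div_iff₀ hx]; linarith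
  have := log_le_half_sub_inv ht
  rw [Real.log_div (by linarith) hx.ne'] at this
  have heq : ((x + 1) / x - ((x + 1) / x)⁻¹) / 2 = 1 / (2 * x) + 1 / (2 * (x + 1)) := by
    rw [inv_div]
    field_simp
    ring
  linarith [heq ▸ this]

/-- For all `x > 0`, `log x - ψ(x) ≥ 1/(2x)`. -/
theorem log_sub_digamma_ge (x : ℝ) (hx : 0 < x) :
    Real.log x - digamma x ≥ 1 / (2 * x) := by
  set g : ℝ → ℝ := fun y => Real.log y - digamma y - 1 / (2 * y) with hg
  have step : ∀ y : ℝ, 0 < y → g (y + 1) ≤ g y := by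
    intro y hy
    have h1 := digamma_add_one hy
    have h2 := log_trapezoid hy
    simp only [hg]
    rw [h1]
    have h3 : 1 / y = 1 / (2 * y) + 1 / (2 * y) := by
      field_simp
      norm_num
    linarith
  have ind : ∀ n : ℕ, g (x + n) ≤ g x := by
    intro n
    induction n with
    | zero => simp
    | succ k ih =>
      have e : x + ((k : ℕ) + 1 : ℕ) = (x + (k : ℕ)) + 1 := by push_cast; ring
      rw [e]
      exact le_trans (step _ (by positivity)) ih
  have tail : ∀ n : ℕ, -(1 / (2 * (x + n))) ≤ g x := by
    intro n
    have hp : (0:ℝ) < x + n := by positivity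
    have h1 := digamma_le_log hp
    have h2 := ind n
    simp only [hg] at h2 ⊢
    linarith
  have hlim : Filter.Tendsto (fun n : ℕ => -(1 / (2 * (x + n)))) Filter.atTop (nhds 0) := by
    have h1 : Filter.Tendsto (fun n : ℕ => 2 * (x + (n : ℝ))) Filter.atTop Filter.atTop :=
      (Filter.tendsto_atTop_add_const_left _ x tendsto_natCast_atTop_atTop).const_mul_atTop two_pos
    have := h1.inv_tendsto_atTop
    simpa [one_div] using this.neg
  have h0 : (0:ℝ) ≤ g x := le_of_tendsto hlim (Filter.Eventually.of_forall tail)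
  simp only [hg] at h0
  linarith
end

section
/- If Z follows a Gamma distribution with shape μ > 0 and scale 1/(μσ), then E[(σZ - 1) log Z] = 1/μ. -/
open Real MeasureTheory ProbabilityTheory Set Filter
open scoped NNReal ENNReal


lemma aux_integrableOn_rpow_exp_log {s b : ℝ} (hs : -1 < s) (hb : 0 < b) :
    IntegrableOn (fun x : ℝ => x ^ s * Real.exp (-(b * x)) * Real.log x) (Set.Ioi 0) := by
  set ε : ℝ := (s + 1) / 2 with hεdef
  have hε : 0 < ε := by rw [hεdef]; linarith
  have h1 : IntegrableOn (fun x : ℝ => x ^ (s + ε) * Real.exp (-(b * x))) (Set.Ioi 0) := by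
    have := integrableOn_rpow_mul_exp_neg_mul_rpow (s := s + ε) (p := 1) (b := b)
      (by linarith) one_pos hb
    simpa [Real.rpow_one, neg_mul] using this
  have h2 : IntegrableOn (fun x : ℝ => x ^ (s - ε) * Real.exp (-(b * x))) (Set.Ioi 0) := by
    have := integrableOn_rpow_mul_exp_neg_mul_rpow (s := s - ε) (p := 1) (b := b)
      (by rw [hεdef]; linarith) one_pos hb
    simpa [Real.rpow_one, neg_mul] using this
  have hmaj : IntegrableOn
      (fun x : ℝ => (x ^ (s + ε) * Real.exp (-(b * x)) + x ^ (s - ε) * Real.exp (-(b * x))) / ε)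
      (Set.Ioi 0) := (h1.add h2).div_const ε
  refine hmaj.integrable.mono ?_ ?_
  · refine AEStronglyMeasurable.mul (AEStronglyMeasurable.mul ?_ ?_) ?_
    · exact (measurable_id'.pow_const s).aestronglyMeasurable
    · exact ((measurable_id'.const_mul b).neg.exp).aestronglyMeasurable
    · exact Real.measurable_log.aestronglyMeasurable
  · rw [ae_restrict_iff' measurableSet_Ioi]
    refine ae_of_all _ fun x hx => ?_
    have hx0 : (0:ℝ) < x := hx
    have hE : 0 < Real.exp (-(b * x)) := Real.exp_pos _
    have hxs : 0 < x ^ s := Real.rpow_pos_of_pos hx0 s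
    have hlog : |Real.log x| ≤ x ^ ε / ε + x ^ (-ε) / ε := by
      rw [abs_le]
      constructor
      · have A := Real.log_le_rpow_div (x := x⁻¹) (inv_nonneg.mpr hx0.le) hε
        rw [Real.log_inv, Real.inv_rpow hx0.le, ← Real.rpow_neg hx0.le] at A
        have B : 0 ≤ x ^ ε / ε := by positivity
        linarith
      · have A := Real.log_le_rpow_div hx0.le hε
        have B : 0 ≤ x ^ (-ε) / ε := by positivity
        linarith
    have key : x ^ s * Real.exp (-(b * x)) * |Real.log x|
        ≤ (x ^ (s + ε) * Real.exp (-(b * x)) + x ^ (s - ε) * Real.exp (-(b * x))) / ε := by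
      have h3 : x ^ s * Real.exp (-(b * x)) * |Real.log x|
          ≤ x ^ s * Real.exp (-(b * x)) * (x ^ ε / ε + x ^ (-ε) / ε) := by
        exact mul_le_mul_of_nonneg_left hlog (by positivity)
      refine h3.trans_eq ?_
      rw [Real.rpow_add hx0, show s - ε = s + (-ε) by ring, Real.rpow_add hx0]
      ring
    calc ‖x ^ s * Real.exp (-(b * x)) * Real.log x‖
        = x ^ s * Real.exp (-(b * x)) * |Real.log x| := by
          rw [Real.norm_eq_abs, abs_mul, abs_of_nonneg (by positivity : (0:ℝ) ≤ x ^ s * Real.exp (-(b * x)))]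
      _ ≤ (x ^ (s + ε) * Real.exp (-(b * x)) + x ^ (s - ε) * Real.exp (-(b * x))) / ε := key
      _ ≤ ‖(x ^ (s + ε) * Real.exp (-(b * x)) + x ^ (s - ε) * Real.exp (-(b * x))) / ε‖ :=
          le_abs_self _

/-- If `Z ~ Gamma(μ, 1/(μσ))` (shape `μ`, rate `μσ`),
then `E[(σZ - 1) log Z] = 1/μ`. -/
theorem integral_sigma_sub_one_mul_log (μ σ : ℝ) (hμ : 0 < μ) (hσ : 0 < σ) :
    ∫ z, (σ * z - 1) * Real.log z ∂(gammaMeasure μ (μ * σ)) = 1 / μ := by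
  set r : ℝ := μ * σ with hrdef
  have hr : 0 < r := mul_pos hμ hσ
  have hΓ : 0 < Real.Gamma μ := Real.Gamma_pos_of_pos hμ
  set c : ℝ := r ^ μ / Real.Gamma μ with hcdef
  have hc : 0 < c := by positivity
  set k : ℝ := c / μ with hkdef
  -- Step 1: unfold the withDensity integral
  have h1 : ∫ z, (σ * z - 1) * Real.log z ∂(gammaMeasure μ r)
      = ∫ z, gammaPDFReal μ r z * ((σ * z - 1) * Real.log z) := by
    rw [gammaMeasure]
    have : (gammaPDF μ r) = fun x => ((Real.toNNReal (gammaPDFReal μ r x) : ℝ≥0) : ℝ≥0∞) := by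
      funext x; rfl
    rw [this, integral_withDensity_eq_integral_smul
      (measurable_gammaPDFReal μ r).real_toNNReal]
    congr 1
    funext x
    rw [NNReal.smul_def, Real.coe_toNNReal _ (gammaPDFReal_nonneg hμ hr x), smul_eq_mul]
  -- Step 2: restrict to Ioi 0
  have h2 : ∫ z, gammaPDFReal μ r z * ((σ * z - 1) * Real.log z)
      = ∫ z in Set.Ioi 0, gammaPDFReal μ r z * ((σ * z - 1) * Real.log z) := by
    refine (setIntegral_eq_integral_of_forall_compl_eq_zero fun x hx => ?_).symm
    rcases (not_lt.mp (fun h : 0 < x => hx h)).lt_or_eq with h | h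
    · simp [gammaPDFReal, not_le.mpr h]
    · rw [h, Real.log_zero, mul_zero, mul_zero]
  -- derivative setup
  set E : ℝ → ℝ := fun z => Real.exp (-(r * z)) with hEdef
  set G : ℝ → ℝ := fun z => -(k * (z ^ μ * E z * Real.log z)) with hGdef
  set G' : ℝ → ℝ := fun z =>
      -(k * ((μ * z ^ (μ - 1) * E z + z ^ μ * (E z * -r)) * Real.log z
        + z ^ μ * E z * z⁻¹)) with hG'def
  have hderiv : ∀ z ∈ Set.Ioi (0:ℝ), HasDerivAt G (G' z) z := by
    intro z hz
    have hz0 : (0:ℝ) < z := hz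
    have d1 : HasDerivAt (fun z : ℝ => z ^ μ) (μ * z ^ (μ - 1)) z :=
      Real.hasDerivAt_rpow_const (Or.inl hz0.ne')
    have d2 : HasDerivAt E (E z * -r) z := by
      have : HasDerivAt (fun z : ℝ => -(r * z)) (-r) z := by
        simpa [Pi.neg_def] using ((hasDerivAt_id z).const_mul r).neg
      simpa [hEdef] using this.exp
    have d3 : HasDerivAt Real.log z⁻¹ z := Real.hasDerivAt_log hz0.ne'
    have := (((d1.mul d2).mul d3).const_mul k).neg
    simpa [hG'def, Pi.neg_def] using this
  -- pointwise identity on Ioi 0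
  have hident : ∀ z ∈ Set.Ioi (0:ℝ),
      gammaPDFReal μ r z * ((σ * z - 1) * Real.log z)
      = G' z + k * (z ^ (μ - 1) * E z) := by
    intro z hz
    have hz0 : (0:ℝ) < z := hz
    have hzμ : z ^ μ = z ^ (μ - 1) * z := by
      rw [Real.rpow_sub_one hz0.ne', div_mul_cancel₀ _ hz0.ne']
    rw [hG'def]
    simp only [gammaPDFReal, if_pos hz0.le, hkdef, hcdef, hrdef]
    rw [hzμ]
    have hzz : z * z⁻¹ = 1 := mul_inv_cancel₀ hz0.ne'
    field_simp
    ring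
  -- integrability
  have hw : IntegrableOn (fun z : ℝ => z ^ (μ - 1) * E z) (Set.Ioi 0) := by
    have := integrableOn_rpow_mul_exp_neg_mul_rpow (s := μ - 1) (p := 1) (b := r)
      (by linarith) one_pos hr
    simpa [hEdef, Real.rpow_one, neg_mul] using this
  have hInt : IntegrableOn (fun z => gammaPDFReal μ r z * ((σ * z - 1) * Real.log z))
      (Set.Ioi 0) := by
    have hA : IntegrableOn (fun z : ℝ =>
        c * (σ * (z ^ μ * E z * Real.log z) - z ^ (μ - 1) * E z * Real.log z))
        (Set.Ioi 0) := by
      refine Integrable.const_mul (Integrable.sub ?_ ?_) c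
      · exact ((aux_integrableOn_rpow_exp_log (by linarith) hr).const_mul σ)
      · exact aux_integrableOn_rpow_exp_log (by linarith) hr
    refine hA.congr_fun (fun z hz => ?_) measurableSet_Ioi
    have hz0 : (0:ℝ) < z := hz
    simp only [gammaPDFReal, if_pos hz0.le, hcdef, hEdef]
    have hzμ : z ^ μ = z ^ (μ - 1) * z := by
      rw [Real.rpow_sub_one hz0.ne', div_mul_cancel₀ _ hz0.ne']
    rw [hzμ]; ring
  have hG'int : IntegrableOn G' (Set.Ioi 0) := by
    have hsub : IntegrableOn (fun z => gammaPDFReal μ r z * ((σ * z - 1) * Real.log z)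
        - k * (z ^ (μ - 1) * E z)) (Set.Ioi 0) := hInt.sub (hw.const_mul k)
    refine hsub.congr_fun (fun z hz => ?_) measurableSet_Ioi
    have := hident z hz
    linarith [this]
  -- limits
  have hG0 : G 0 = 0 := by
    simp [hGdef, Real.zero_rpow hμ.ne']
  have htop : Tendsto G atTop (nhds 0) := by
    have h1 : Tendsto (fun z : ℝ => z ^ (μ + 1) * Real.exp (-(r * z))) atTop (nhds 0) := by
      have := tendsto_rpow_mul_exp_neg_mul_atTop_nhds_zero (μ + 1) r hr
      simpa [neg_mul] using this
    have h2 : Tendsto (fun z : ℝ => Real.log z / z) atTop (nhds 0) := by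
      simpa using isLittleO_log_id_atTop.tendsto_div_nhds_zero
    have h3 : Tendsto (fun z : ℝ =>
        -(k * (z ^ (μ + 1) * Real.exp (-(r * z)) * (Real.log z / z)))) atTop (nhds 0) := by
      have := ((h1.mul h2).const_mul k).neg
      simpa using this
    refine h3.congr' ?_
    filter_upwards [eventually_gt_atTop (0:ℝ)] with z hz
    have hzμ : z ^ (μ + 1) = z ^ μ * z := Real.rpow_add_one hz.ne' μ
    rw [hGdef]
    simp only [hEdef, hzμ]
    field_simp
  have hcont : ContinuousWithinAt G (Set.Ici 0) 0 := by
    rw [← Set.Ioi_insert]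
    rw [continuousWithinAt_insert_self]
    have h1 : Tendsto (fun z : ℝ => Real.log z * z ^ μ) (nhdsWithin 0 (Set.Ioi 0)) (nhds 0) :=
      tendsto_log_mul_rpow_nhdsGT_zero hμ
    have h2 : Tendsto E (nhdsWithin 0 (Set.Ioi 0)) (nhds 1) := by
      have hcE : ContinuousWithinAt E (Set.Ioi 0) 0 :=
        (((continuous_const.mul continuous_id).neg.rexp).continuousAt).continuousWithinAt
      have hE0 : E 0 = 1 := by simp [hEdef]
      rw [← hE0]
      exact hcE
    have h3 : Tendsto G (nhdsWithin 0 (Set.Ioi 0)) (nhds (-(k * (0 * 1)))) := by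
      have := ((h1.mul h2).const_mul k).neg
      refine this.congr fun z => ?_
      rw [hGdef]; ring_nf
    rw [show ContinuousWithinAt G (Set.Ioi 0) 0 ↔
        Tendsto G (nhdsWithin 0 (Set.Ioi 0)) (nhds (G 0)) from Iff.rfl, hG0]
    simpa using h3
  -- FTC
  have hFTC : ∫ z in Set.Ioi 0, G' z = 0 - G 0 :=
    integral_Ioi_of_hasDerivAt_of_tendsto hcont hderiv hG'int htop
  -- Gamma integral
  have hwval : ∫ z in Set.Ioi 0, z ^ (μ - 1) * E z = (1 / r) ^ μ * Real.Gamma μ := by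
    simpa [hEdef] using Real.integral_rpow_mul_exp_neg_mul_Ioi hμ hr
  -- assemble
  rw [h1, h2]
  rw [setIntegral_congr_fun measurableSet_Ioi hident]
  rw [integral_add hG'int (hw.const_mul k), hFTC, hG0, integral_const_mul, hwval]
  have hrμ : r ^ μ ≠ 0 := (Real.rpow_pos_of_pos hr μ).ne'
  rw [hkdef, hcdef, one_div, Real.inv_rpow hr.le]
  field_simp
  ring
end

section
/- Let g₂(z) = (σ - 1/z) T₁'(T₁⁻¹(z)) T₁⁻¹(z) log(T₁⁻¹(z)) and g₁(z) = 1 + [1 + U(z)] log(T₁⁻¹(z)), where U(z) = [T₁''(T₁⁻¹(z))/T₁'(T₁⁻¹(z)) - T₁'(T₁⁻¹(z))/z] T₁⁻¹(z), for a smooth strictly monotone T₁ with smooth inverse. Then g₂''(1/σ) = 2σ² g₁(1/σ). -/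
open Real

/-- With `g₁(z) = 1 + (1 + U(z)) log T₁⁻¹(z)` and
`g₂(z) = (σ - 1/z) T₁'(T₁⁻¹(z)) T₁⁻¹(z) log T₁⁻¹(z)`, one has
`g₂''(1/σ) = 2σ² g₁(1/σ)`. -/
theorem g2_second_deriv_eq (T₁ Tinv : ℝ → ℝ) (σ : ℝ) (hσ : 0 < σ)
    (hdiff : ContDiffOn ℝ 3 T₁ (Set.Ioi 0))
    (hdiffinv : ContDiffOn ℝ 3 Tinv (Set.Ioi 0))
    (hderiv : ∀ x : ℝ, 0 < x → deriv T₁ x ≠ 0)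
    (hinv : ∀ x : ℝ, 0 < x → Tinv (T₁ x) = x)
    (hinv' : ∀ z : ℝ, 0 < z → 0 < Tinv z ∧ T₁ (Tinv z) = z) :
    deriv (deriv (fun z : ℝ =>
        (σ - 1 / z) * deriv T₁ (Tinv z) * Tinv z * Real.log (Tinv z))) (1 / σ) =
      2 * σ ^ 2 *
        (1 + (1 + (deriv (deriv T₁) (Tinv (1 / σ)) / deriv T₁ (Tinv (1 / σ)) -
            deriv T₁ (Tinv (1 / σ)) / (1 / σ)) * Tinv (1 / σ)) *
          Real.log (Tinv (1 / σ))) := by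
  have hopen : IsOpen (Set.Ioi (0:ℝ)) := isOpen_Ioi
  have hupos : ∀ z : ℝ, 0 < z → 0 < Tinv z := fun z hz => (hinv' z hz).1
  have hTu : ∀ z : ℝ, 0 < z → T₁ (Tinv z) = z := fun z hz => (hinv' z hz).2
  have hd2 : ContDiffOn ℝ 2 (deriv T₁) (Set.Ioi 0) :=
    hdiff.deriv_of_isOpen hopen (by norm_num)
  have hdd1 : ContDiffOn ℝ 1 (deriv (deriv T₁)) (Set.Ioi 0) :=
    hd2.deriv_of_isOpen hopen (by norm_num)
  have hT₁at : ∀ x : ℝ, 0 < x → HasDerivAt T₁ (deriv T₁ x) x := fun x hx =>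
    ((hdiff.contDiffAt (Ioi_mem_nhds hx)).differentiableAt (by norm_num)).hasDerivAt
  have hdAt : ∀ x : ℝ, 0 < x → HasDerivAt (deriv T₁) (deriv (deriv T₁) x) x := fun x hx =>
    ((hd2.contDiffAt (Ioi_mem_nhds hx)).differentiableAt (by norm_num)).hasDerivAt
  have hTinvAt : ∀ z : ℝ, 0 < z → HasDerivAt Tinv ((deriv T₁ (Tinv z))⁻¹) z := by
    intro z hz
    have h0 : HasDerivAt Tinv (deriv Tinv z) z :=
      ((hdiffinv.contDiffAt (Ioi_mem_nhds hz)).differentiableAt (by norm_num)).hasDerivAt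
    have hcomp : HasDerivAt (T₁ ∘ Tinv) (deriv T₁ (Tinv z) * deriv Tinv z) z :=
      (hT₁at _ (hupos z hz)).comp z h0
    have heq : (T₁ ∘ Tinv) =ᶠ[nhds z] id := by
      filter_upwards [Ioi_mem_nhds hz] with w hw
      exact hTu w hw
    have h1 : deriv T₁ (Tinv z) * deriv Tinv z = 1 :=
      (hcomp.congr_of_eventuallyEq heq.symm).unique (hasDerivAt_id z)
    have h2 : deriv Tinv z = (deriv T₁ (Tinv z))⁻¹ := eq_inv_of_mul_eq_one_right h1
    rwa [h2] at h0
  -- the inner function and its derivative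
  set F : ℝ → ℝ := fun z => deriv T₁ (Tinv z) * Tinv z * Real.log (Tinv z) with hFdef
  set F' : ℝ → ℝ := fun z =>
      (deriv (deriv T₁) (Tinv z) * (deriv T₁ (Tinv z))⁻¹ * Tinv z +
        deriv T₁ (Tinv z) * (deriv T₁ (Tinv z))⁻¹) * Real.log (Tinv z) +
      deriv T₁ (Tinv z) * Tinv z * ((Tinv z)⁻¹ * (deriv T₁ (Tinv z))⁻¹) with hF'def
  have hF : ∀ z : ℝ, 0 < z → HasDerivAt F (F' z) z := by
    intro z hz
    have hu := hupos z hz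
    have h1 : HasDerivAt (fun w => deriv T₁ (Tinv w))
        (deriv (deriv T₁) (Tinv z) * (deriv T₁ (Tinv z))⁻¹) z :=
      (hdAt _ hu).comp z (hTinvAt z hz)
    have h2 := h1.mul (hTinvAt z hz)
    have h3 : HasDerivAt (fun w => Real.log (Tinv w))
        ((Tinv z)⁻¹ * (deriv T₁ (Tinv z))⁻¹) z :=
      (Real.hasDerivAt_log hu.ne').comp z (hTinvAt z hz)
    exact h2.mul h3
  -- derivative of the outer function on Ioi 0
  set G : ℝ → ℝ := fun z => (z ^ 2)⁻¹ * F z + (σ - 1 / z) * F' z with hGdef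
  have hg2 : ∀ z : ℝ, 0 < z →
      HasDerivAt (fun z : ℝ =>
        (σ - 1 / z) * deriv T₁ (Tinv z) * Tinv z * Real.log (Tinv z)) (G z) z := by
    intro z hz
    have hA : HasDerivAt (fun w : ℝ => σ - 1 / w) ((z ^ 2)⁻¹) z := by
      simpa [one_div] using ((hasDerivAt_inv hz.ne').const_sub σ)
    have : HasDerivAt (fun w : ℝ => (σ - 1 / w) * F w) ((z ^ 2)⁻¹ * F z + (σ - 1 / z) * F' z) z :=
      hA.mul (hF z hz)
    have heq : (fun w : ℝ => (σ - 1 / w) * F w) =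
        (fun w : ℝ => (σ - 1 / w) * deriv T₁ (Tinv w) * Tinv w * Real.log (Tinv w)) := by
      funext w; simp only [hFdef]; ring
    rw [heq] at this
    exact this
  have hz0 : (0:ℝ) < 1 / σ := by positivity
  -- deriv of outer fn agrees with G near 1/σ
  have hev : deriv (fun z : ℝ =>
      (σ - 1 / z) * deriv T₁ (Tinv z) * Tinv z * Real.log (Tinv z)) =ᶠ[nhds (1 / σ)] G := by
    filter_upwards [Ioi_mem_nhds hz0] with w hw
    exact (hg2 w hw).deriv
  rw [hev.deriv_eq]
  -- F' is differentiable at 1/σ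
  have hu0 := hupos _ hz0
  have hdne := hderiv _ hu0
  have hTinvD : DifferentiableAt ℝ Tinv (1 / σ) := (hTinvAt _ hz0).differentiableAt
  have hdTD : DifferentiableAt ℝ (fun w => deriv T₁ (Tinv w)) (1 / σ) :=
    ((hdAt _ hu0).differentiableAt).comp _ hTinvD
  have hddD : DifferentiableAt ℝ (fun w => deriv (deriv T₁) (Tinv w)) (1 / σ) :=
    (((hdd1.contDiffAt (Ioi_mem_nhds hu0)).differentiableAt (by norm_num))).comp _ hTinvD
  have hlogD : DifferentiableAt ℝ (fun w => Real.log (Tinv w)) (1 / σ) :=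
    (Real.differentiableAt_log hu0.ne').comp _ hTinvD
  have hF'D : DifferentiableAt ℝ F' (1 / σ) := by
    apply DifferentiableAt.add
    · exact ((hddD.mul (hdTD.inv hdne)).mul hTinvD |>.add (hdTD.mul (hdTD.inv hdne))).mul hlogD
    · exact (hdTD.mul hTinvD).mul ((hTinvD.inv hu0.ne').mul (hdTD.inv hdne))
  -- compute deriv G (1/σ)
  have hz0ne : (1 / σ : ℝ) ≠ 0 := hz0.ne'
  have hGat : HasDerivAt G
      ((-((2:ℝ) * (1/σ) ^ 1) / ((1/σ) ^ 2) ^ 2) * F (1/σ) + ((1/σ) ^ 2)⁻¹ * F' (1/σ) +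
        (((1/σ) ^ 2)⁻¹ * F' (1/σ) + (σ - 1 / (1/σ)) * deriv F' (1/σ))) (1/σ) := by
    have h1 : HasDerivAt (fun w : ℝ => (w ^ 2)⁻¹)
        (-((2:ℝ) * (1/σ) ^ 1) / ((1/σ) ^ 2) ^ 2) (1/σ) :=
      (hasDerivAt_pow 2 (1/σ)).inv (pow_ne_zero _ hz0ne)
    have hA : HasDerivAt (fun w : ℝ => σ - 1 / w) (((1/σ) ^ 2)⁻¹) (1/σ) := by
      simpa [one_div] using ((hasDerivAt_inv hz0ne).const_sub σ)
    exact (h1.mul (hF _ hz0)) |>.add (hA.mul hF'D.hasDerivAt)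
  rw [hGat.deriv]
  -- now pure algebra
  have hσσ : 1 / (1 / σ) = σ := one_div_one_div σ
  rw [hσσ]
  simp only [hFdef, hF'def, sub_self, zero_mul, add_zero]
  have hune := hu0.ne'
  have hσne := hσ.ne'
  field_simp
  ring
end
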